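/- The functions h₁ and h₃ are strictly decreasing in the energy: for all c, c′ with 2/√3 ≤ c < c′, one has h₁(c′) < h₁(c) and h₃(c′) < h₃(c), where h₁(c) = ∫_{π/3}^{2π/3} (1 − R⁻(c·sin ψ)²)⁻¹ dψ and h₃(c) = ∫_{π/3}^{2π/3} (R⁺(c·sin ψ)² − 1)⁻¹ dψ. -/

import Mathlib

/-!
Both integrands have the form `F (c * sin ψ)` with `F x = (1 - R⁻(x)²)⁻¹` or `(R⁺(x)² - 1)⁻¹`,
and `F` is strictly decreasing on `(1, ∞)` because `R⁻` decreases and `R⁺` increases. Everything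
else is integrability at the endpoint energy `c = 2/√3`, where `c sin ψ = 1` at both ends.
With `s = R²` one has `log K = (s - 1 - log s) / 2 ≤ (s - 1)² / (2s)`, so `K R - 1` is at most of
order `(R² - 1)²` and `F x = O((x - 1)^(-1/2))`. Conversely
`sin ψ - sin (π/3) = 2 sin ((ψ - π/3)/2) sin ((2π/3 - ψ)/2)` and Jordan's inequality give
`c sin ψ - 1 ≥ (ψ - π/3)(2π/3 - ψ)/5`, and `((ψ - a)(b - ψ))^(-1/2)` is integrable on `(a, b)`.
-/

open Real MeasureTheory Set

noncomputable def K (R : ℝ) : ℝ := Real.exp ((R ^ 2 - 1) / 2) / R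

lemma K_one : K 1 = 1 := by simp [K]

lemma K_pos {R : ℝ} (hR : 0 < R) : 0 < K R := div_pos (exp_pos _) hR

lemma K_lt_K_iff {R R' : ℝ} (hR : 0 < R) (hR' : 0 < R') :
    K R < K R' ↔ R' / R < exp ((R' ^ 2 - R ^ 2) / 2) := by
  have hsplit : exp ((R' ^ 2 - 1) / 2) = exp ((R ^ 2 - 1) / 2) * exp ((R' ^ 2 - R ^ 2) / 2) := by
    rw [← exp_add]; ring_nf
  rw [K, K, div_lt_div_iff₀ hR hR', hsplit, div_lt_iff₀ hR, mul_assoc,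
    mul_lt_mul_iff_right₀ (exp_pos _), mul_comm]

lemma K_strictMonoOn : StrictMonoOn K (Ici 1) := by
  intro R (hR : 1 ≤ R) R' (hR' : 1 ≤ R') hlt
  rw [K_lt_K_iff (by linarith) (by linarith)]
  calc R' / R ≤ (R' ^ 2 - R ^ 2) / 2 + 1 := by
        have : 2 ≤ R * (R' + R) := by nlinarith
        rw [div_le_iff₀ (by linarith)]
        nlinarith [mul_nonneg (sub_nonneg.2 hlt.le) (sub_nonneg.2 this)]
    _ < exp ((R' ^ 2 - R ^ 2) / 2) := add_one_lt_exp (by nlinarith)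

lemma K_strictAntiOn : StrictAntiOn K (Ioc 0 1) := by
  intro R ⟨hR0, hR1⟩ R' ⟨hR'0, hR'1⟩ hlt
  rw [K_lt_K_iff hR'0 hR0]
  calc R / R' ≤ (R ^ 2 - R' ^ 2) / 2 + 1 := by
        have : R' * (R + R') ≤ 2 := by nlinarith
        rw [div_le_iff₀ hR'0]
        nlinarith [mul_nonneg (sub_nonneg.2 hlt.le) (sub_nonneg.2 this)]
    _ < exp ((R ^ 2 - R' ^ 2) / 2) := add_one_lt_exp (by nlinarith)

lemma one_lt_K_of_one_lt {R : ℝ} (hR : 1 < R) : 1 < K R :=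
  K_one ▸ K_strictMonoOn self_mem_Ici hR.le hR

lemma one_lt_K_of_lt_one {R : ℝ} (hR0 : 0 < R) (hR1 : R < 1) : 1 < K R :=
  K_one ▸ K_strictAntiOn ⟨hR0, hR1.le⟩ ⟨one_pos, le_rfl⟩ hR1

lemma two_mul_sq_mul_K_sub_one_le {R : ℝ} (hR : 0 < R) :
    2 * R ^ 2 * (K R - 1) ≤ (R ^ 2 - 1) ^ 2 * K R := by
  have hlogK : log (K R) = ((R ^ 2 - 1) - log (R ^ 2)) / 2 := by
    rw [K, log_div (exp_pos _).ne' hR.ne', log_exp, log_pow]; ring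
  have hK := one_sub_inv_le_log_of_pos (K_pos hR)
  have hR2 := one_sub_inv_le_log_of_pos (pow_pos hR 2)
  have : 2 * R ^ 2 * (1 - (K R)⁻¹) ≤ (R ^ 2 - 1) ^ 2 := by
    have := mul_inv_cancel₀ (pow_pos hR 2).ne'
    nlinarith [sq_nonneg R]
  have := mul_inv_cancel₀ (K_pos hR).ne'
  nlinarith [K_pos hR]

lemma inv_sq_sub_one_le_one_add_inv_sqrt {R : ℝ} (hR : 1 < R) :
    (R ^ 2 - 1)⁻¹ ≤ 1 + (√(K R - 1))⁻¹ := by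
  have hK := one_lt_K_of_one_lt hR
  have key := two_mul_sq_mul_K_sub_one_le (by linarith : 0 < R)
  set t := √(K R - 1)
  have ht : 0 < t := sqrt_pos.2 (by linarith)
  rw [show K R = 1 + t ^ 2 by rw [sq_sqrt (by linarith)]; ring] at key
  have hw : 0 < R ^ 2 - 1 := by nlinarith
  have : t ≤ (R ^ 2 - 1) * (1 + t) := by
    rw [← sq_le_sq₀ ht.le (by positivity)]
    nlinarith
  rw [inv_le_iff_one_le_mul₀ hw]
  have := mul_inv_cancel₀ ht.ne'
  nlinarith

lemma inv_one_sub_sq_le_two_add_inv_sqrt {R : ℝ} (hR0 : 0 < R) (hR1 : R < 1) :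
    (1 - R ^ 2)⁻¹ ≤ 2 + (√(K R - 1))⁻¹ := by
  have hK := one_lt_K_of_lt_one hR0 hR1
  have key := two_mul_sq_mul_K_sub_one_le hR0
  set t := √(K R - 1)
  have ht : 0 < t := sqrt_pos.2 (by linarith)
  rw [show K R = 1 + t ^ 2 by rw [sq_sqrt (by linarith)]; ring] at key
  have hw : 0 < 1 - R ^ 2 := by nlinarith
  have : t ≤ (1 - R ^ 2) * (1 + 2 * t) := by
    rcases le_or_gt (1 / 2) (1 - R ^ 2) with hw2 | hw2
    · nlinarith
    · have : t ≤ (1 - R ^ 2) * (1 + t) := by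
        rw [← sq_le_sq₀ ht.le (by positivity)]
        nlinarith
      nlinarith
  rw [inv_le_iff_one_le_mul₀ hw]
  have := mul_inv_cancel₀ ht.ne'
  nlinarith

lemma two_div_pi_sq_mul_le_sin_sub {ψ : ℝ} (h1 : π / 3 ≤ ψ) (h2 : ψ ≤ 2 * π / 3) :
    2 / π ^ 2 * ((ψ - π / 3) * (2 * π / 3 - ψ)) ≤ sin ψ - √3 / 2 := by
  have hπ := pi_pos
  have hcos : cos ((ψ + π / 3) / 2) = sin ((2 * π / 3 - ψ) / 2) := by
    rw [← sin_pi_div_two_sub]; ring_nf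
  rw [← sin_pi_div_three, sin_sub_sin, hcos]
  have hl := mul_le_sin (x := (ψ - π / 3) / 2) (by linarith) (by linarith)
  have hr := mul_le_sin (x := (2 * π / 3 - ψ) / 2) (by linarith) (by linarith)
  have hl0 : 0 ≤ 2 / π * ((ψ - π / 3) / 2) := by positivity
  have hr0 : 0 ≤ 2 / π * ((2 * π / 3 - ψ) / 2) := mul_nonneg (by positivity) (by linarith)
  calc 2 / π ^ 2 * ((ψ - π / 3) * (2 * π / 3 - ψ))
      = 2 * (2 / π * ((ψ - π / 3) / 2)) * (2 / π * ((2 * π / 3 - ψ) / 2)) := by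
        field_simp
    _ ≤ 2 * sin ((ψ - π / 3) / 2) * sin ((2 * π / 3 - ψ) / 2) :=
        mul_le_mul (mul_le_mul_of_nonneg_left hl zero_le_two) hr hr0 (by linarith)

lemma mul_sub_mul_sub_div_five_le_mul_sin_sub_one {c ψ : ℝ} (hc : 2 / √3 ≤ c) (h1 : π / 3 ≤ ψ)
    (h2 : ψ ≤ 2 * π / 3) : (ψ - π / 3) * (2 * π / 3 - ψ) / 5 ≤ c * sin ψ - 1 := by
  have hsin := two_div_pi_sq_mul_le_sin_sub h1 h2
  have hs3 : √3 * √3 = 3 := mul_self_sqrt (by norm_num)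
  have hs3pos : 0 < √3 := by positivity
  have hc1 : 2 ≤ c * √3 := by rwa [div_le_iff₀ hs3pos] at hc
  have hc1' : 1 ≤ c := by nlinarith
  have hpq : 0 ≤ (ψ - π / 3) * (2 * π / 3 - ψ) := mul_nonneg (by linarith) (by linarith)
  have hπ2 : π ^ 2 < 10 := by nlinarith [pi_lt_d2, pi_pos]
  have hπ : 1 / 5 ≤ 2 / π ^ 2 := by
    rw [le_div_iff₀ (by positivity)]; linarith
  nlinarith [mul_le_mul_of_nonneg_right hπ hpq]

lemma one_lt_mul_sin {c ψ : ℝ} (hc : 2 / √3 ≤ c) (hψ : ψ ∈ Ioo (π / 3) (2 * π / 3)) :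
    1 < c * sin ψ := by
  have := mul_sub_mul_sub_div_five_le_mul_sin_sub_one hc hψ.1.le hψ.2.le
  have : 0 < (ψ - π / 3) * (2 * π / 3 - ψ) := mul_pos (by linarith [hψ.1]) (by linarith [hψ.2])
  linarith

lemma intervalIntegrable_inv_sqrt_mul_sub {a b : ℝ} (hab : a < b) :
    IntervalIntegrable (fun x => (√((x - a) * (b - x)))⁻¹) volume a b := by
  have hleft : IntervalIntegrable (fun x => (x - a) ^ (-(1 / 2) : ℝ)) volume a b := by
    simpa using (intervalIntegral.intervalIntegrable_rpow' (a := 0) (b := b - a)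
      (by norm_num : (-1 : ℝ) < -(1 / 2))).comp_sub_right a
  have hright : IntervalIntegrable (fun x => (b - x) ^ (-(1 / 2) : ℝ)) volume a b := by
    simpa using (intervalIntegral.intervalIntegrable_rpow' (a := b - a) (b := 0)
      (by norm_num : (-1 : ℝ) < -(1 / 2))).comp_sub_left b
  refine ((hleft.add hright).const_mul (√(b - a))⁻¹).mono_fun' (by fun_prop) ?_
  rw [uIoc_of_le hab.le, ← restrict_Ioo_eq_restrict_Ioc]
  refine ae_restrict_of_forall_mem measurableSet_Ioo fun x ⟨hxa, hxb⟩ => ?_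
  have hp : 0 < x - a := by linarith
  have hq : 0 < b - x := by linarith
  have hsum : √(b - a) ≤ √(x - a) + √(b - x) := by
    rw [sqrt_le_left (by positivity)]
    nlinarith [sq_sqrt hp.le, sq_sqrt hq.le, sqrt_nonneg (x - a), sqrt_nonneg (b - x)]
  simp only [norm_inv, norm_eq_abs, rpow_neg hp.le,
    rpow_neg hq.le, ← sqrt_eq_rpow, sqrt_mul hp.le]
  have hPQ : 0 < √(x - a) * √(b - x) := by positivity
  rw [inv_add_inv (by positivity) (by positivity), ← div_eq_inv_mul, le_div_iff₀ (by positivity),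
    abs_of_pos hPQ, inv_mul_eq_div]
  exact div_le_div_of_nonneg_right hsum hPQ.le

lemma intervalIntegrable_comp_mul_sin {F : ℝ → ℝ} (hF : ContinuousOn F (Ioi 1)) {D C : ℝ}
    (hC : 0 ≤ C) (hbd : ∀ x, 1 < x → |F x| ≤ D + C / √(x - 1)) {c : ℝ} (hc : 2 / √3 ≤ c) :
    IntervalIntegrable (fun ψ => F (c * sin ψ)) volume (π / 3) (2 * π / 3) := by
  have hlt : π / 3 < 2 * π / 3 := by linarith [pi_pos]
  have hdom := (intervalIntegrable_inv_sqrt_mul_sub hlt).const_mul (C * √5)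
  refine (intervalIntegrable_const (c := D)).add hdom |>.mono_fun' ?_ ?_ <;>
    rw [uIoc_of_le hlt.le, ← restrict_Ioo_eq_restrict_Ioc]
  · exact (hF.comp (by fun_prop) fun ψ hψ => one_lt_mul_sin hc hψ).aestronglyMeasurable
      measurableSet_Ioo
  refine ae_restrict_of_forall_mem measurableSet_Ioo fun ψ hψ => ?_
  have hpq : 0 < (ψ - π / 3) * (2 * π / 3 - ψ) := mul_pos (by linarith [hψ.1]) (by linarith [hψ.2])
  have hsqrt : (√(c * sin ψ - 1))⁻¹ ≤ √5 * (√((ψ - π / 3) * (2 * π / 3 - ψ)))⁻¹ := by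
    calc (√(c * sin ψ - 1))⁻¹ ≤ (√((ψ - π / 3) * (2 * π / 3 - ψ) / 5))⁻¹ :=
          inv_anti₀ (by positivity)
            (sqrt_le_sqrt (mul_sub_mul_sub_div_five_le_mul_sin_sub_one hc hψ.1.le hψ.2.le))
      _ = √5 * (√((ψ - π / 3) * (2 * π / 3 - ψ)))⁻¹ := by
          rw [sqrt_div hpq.le, inv_div, div_eq_mul_inv]
  calc ‖F (c * sin ψ)‖ ≤ D + C / √(c * sin ψ - 1) := hbd _ (one_lt_mul_sin hc hψ)
    _ ≤ D + C * √5 * (√((ψ - π / 3) * (2 * π / 3 - ψ)))⁻¹ := by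
        rw [mul_assoc, div_eq_mul_inv]; gcongr

lemma integral_lt_integral_of_forall_mem_Ioo_lt {f g : ℝ → ℝ} {a b : ℝ} (hab : a < b)
    (hf : IntervalIntegrable f volume a b) (hg : IntervalIntegrable g volume a b)
    (hlt : ∀ x ∈ Ioo a b, f x < g x) : ∫ x in a..b, f x < ∫ x in a..b, g x := by
  refine intervalIntegral.integral_lt_integral_of_ae_le_of_measure_setOfPred_lt_ne_zero hab.le
    hf hg ?_ ?_ <;> rw [← restrict_Ioo_eq_restrict_Ioc]
  · exact ae_restrict_of_forall_mem measurableSet_Ioo fun x hx => (hlt x hx).le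
  · refine (lt_of_lt_of_le ?_ (measure_mono (show Ioo a b ⊆ {x | f x < g x} from hlt))).ne'
    rw [Measure.restrict_apply_self, Real.volume_Ioo]
    exact ENNReal.ofReal_pos.2 (sub_pos.2 hab)

theorem integral_comp_mul_sin_lt_of_strictAntiOn {F : ℝ → ℝ} (hF : ContinuousOn F (Ioi 1))
    (hanti : StrictAntiOn F (Ioi 1)) {D C : ℝ} (hC : 0 ≤ C)
    (hbd : ∀ x, 1 < x → |F x| ≤ D + C / √(x - 1)) {c c' : ℝ} (hc : 2 / √3 ≤ c)
    (hcc' : c < c') :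
    ∫ ψ in (π / 3)..(2 * π / 3), F (c' * sin ψ) < ∫ ψ in (π / 3)..(2 * π / 3), F (c * sin ψ) := by
  have hc' : 2 / √3 ≤ c' := hc.trans hcc'.le
  refine integral_lt_integral_of_forall_mem_Ioo_lt (by linarith [pi_pos])
    (intervalIntegrable_comp_mul_sin hF hC hbd hc') (intervalIntegrable_comp_mul_sin hF hC hbd hc)
    fun ψ hψ => hanti (one_lt_mul_sin hc hψ) (one_lt_mul_sin hc' hψ) ?_
  have : 0 < sin ψ :=
    sin_pos_of_pos_of_lt_pi (by linarith [hψ.1, pi_pos]) (by linarith [hψ.2, pi_pos])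
  gcongr

section Rm

variable {Rm : ℝ → ℝ} (hRm : ∀ x : ℝ, 1 < x → 0 < Rm x ∧ Rm x < 1 ∧ K (Rm x) = x)
include hRm

lemma Rm_strictAntiOn : StrictAntiOn Rm (Ioi 1) := by
  intro x hx y hy hxy
  obtain ⟨hx0, hx1, hKx⟩ := hRm x hx
  obtain ⟨hy0, hy1, hKy⟩ := hRm y hy
  exact (K_strictAntiOn.lt_iff_gt ⟨hx0, hx1.le⟩ ⟨hy0, hy1.le⟩).1 (by rwa [hKx, hKy])

lemma Rm_continuousOn : ContinuousOn Rm (Ioi 1) := by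
  intro x hx
  have hmono : MonotoneOn (fun y => -Rm y) (Ioi 1) := fun y hy z hz hyz =>
    neg_le_neg ((Rm_strictAntiOn hRm).antitoneOn hy hz hyz)
  have himage : Ioo (-1) 0 ⊆ (fun y => -Rm y) '' Ioi 1 := by
    rintro r ⟨hr1, hr0⟩
    obtain ⟨h0, h1, hK⟩ := hRm _ (one_lt_K_of_lt_one (neg_pos.2 hr0) (by linarith))
    refine ⟨K (-r), one_lt_K_of_lt_one (neg_pos.2 hr0) (by linarith), ?_⟩
    show -Rm _ = r
    rw [K_strictAntiOn.injOn ⟨h0, h1.le⟩ ⟨neg_pos.2 hr0, by linarith⟩ hK, neg_neg]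
  obtain ⟨h0, h1, -⟩ := hRm x hx
  have := continuousAt_of_monotoneOn_of_image_mem_nhds hmono (Ioi_mem_nhds hx)
    (Filter.mem_of_superset (Ioo_mem_nhds (by linarith) (by linarith)) himage)
  exact (by simpa only [Pi.neg_def, neg_neg] using this.neg : ContinuousAt Rm x).continuousWithinAt

lemma inv_one_sub_Rm_sq_strictAntiOn : StrictAntiOn (fun x => (1 - Rm x ^ 2)⁻¹) (Ioi 1) := by
  intro x hx y hy hxy
  obtain ⟨hy0, -, -⟩ := hRm y hy
  have := Rm_strictAntiOn hRm hx hy hxy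
  exact inv_strictAnti₀ (by nlinarith [(hRm x hx).2.1]) (by nlinarith)

lemma inv_one_sub_Rm_sq_continuousOn : ContinuousOn (fun x => (1 - Rm x ^ 2)⁻¹) (Ioi 1) :=
  (continuousOn_const.sub ((Rm_continuousOn hRm).pow 2)).inv₀ fun x hx => by
    obtain ⟨h0, h1, -⟩ := hRm x hx
    exact (show 0 < 1 - Rm x ^ 2 by nlinarith).ne'

lemma abs_inv_one_sub_Rm_sq_le {x : ℝ} (hx : 1 < x) :
    |(1 - Rm x ^ 2)⁻¹| ≤ 2 + 1 / √(x - 1) := by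
  obtain ⟨h0, h1, hK⟩ := hRm x hx
  have := inv_one_sub_sq_le_two_add_inv_sqrt h0 h1
  rw [hK] at this
  rwa [abs_of_pos (inv_pos.2 (by nlinarith)), one_div]

end Rm

section Rp

variable {Rp : ℝ → ℝ} (hRp : ∀ x : ℝ, 1 < x → 1 < Rp x ∧ K (Rp x) = x)
include hRp

lemma Rp_strictMonoOn : StrictMonoOn Rp (Ioi 1) := by
  intro x hx y hy hxy
  obtain ⟨hx1, hKx⟩ := hRp x hx
  obtain ⟨hy1, hKy⟩ := hRp y hy
  exact (K_strictMonoOn.lt_iff_lt (mem_Ici.2 hx1.le) (mem_Ici.2 hy1.le)).1 (by rwa [hKx, hKy])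

lemma Rp_continuousOn : ContinuousOn Rp (Ioi 1) := by
  intro x hx
  have himage : Ioi 1 ⊆ Rp '' Ioi 1 := by
    intro r (hr : 1 < r)
    obtain ⟨h1, hK⟩ := hRp _ (one_lt_K_of_one_lt hr)
    exact ⟨K r, one_lt_K_of_one_lt hr, K_strictMonoOn.injOn (mem_Ici.2 h1.le) (mem_Ici.2 hr.le) hK⟩
  refine ContinuousAt.continuousWithinAt ?_
  exact continuousAt_of_monotoneOn_of_image_mem_nhds (Rp_strictMonoOn hRp).monotoneOn
    (Ioi_mem_nhds hx) (Filter.mem_of_superset (Ioi_mem_nhds (hRp x hx).1) himage)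

lemma inv_Rp_sq_sub_one_strictAntiOn : StrictAntiOn (fun x => (Rp x ^ 2 - 1)⁻¹) (Ioi 1) := by
  intro x hx y hy hxy
  obtain ⟨hx1, -⟩ := hRp x hx
  have := Rp_strictMonoOn hRp hx hy hxy
  exact inv_strictAnti₀ (by nlinarith) (by nlinarith)

lemma inv_Rp_sq_sub_one_continuousOn : ContinuousOn (fun x => (Rp x ^ 2 - 1)⁻¹) (Ioi 1) :=
  (((Rp_continuousOn hRp).pow 2).sub continuousOn_const).inv₀ fun x hx => by
    obtain ⟨h1, -⟩ := hRp x hx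
    exact (show 0 < Rp x ^ 2 - 1 by nlinarith).ne'

lemma abs_inv_Rp_sq_sub_one_le {x : ℝ} (hx : 1 < x) :
    |(Rp x ^ 2 - 1)⁻¹| ≤ 1 + 1 / √(x - 1) := by
  obtain ⟨h1, hK⟩ := hRp x hx
  have := inv_sq_sub_one_le_one_add_inv_sqrt h1
  rw [hK] at this
  rwa [abs_of_pos (inv_pos.2 (by nlinarith)), one_div]

end Rp

theorem stmt_4 (Rm Rp : ℝ → ℝ)
    (hRm : ∀ x : ℝ, 1 < x → 0 < Rm x ∧ Rm x < 1 ∧ K (Rm x) = x)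
    (hRp : ∀ x : ℝ, 1 < x → 1 < Rp x ∧ K (Rp x) = x)
    (c c' : ℝ) (hc : 2 / Real.sqrt 3 ≤ c) (hcc' : c < c') :
    (∫ ψ in (π / 3)..(2 * π / 3), (1 - (Rm (c' * Real.sin ψ)) ^ 2)⁻¹) <
      (∫ ψ in (π / 3)..(2 * π / 3), (1 - (Rm (c * Real.sin ψ)) ^ 2)⁻¹) ∧
    (∫ ψ in (π / 3)..(2 * π / 3), ((Rp (c' * Real.sin ψ)) ^ 2 - 1)⁻¹) <
      (∫ ψ in (π / 3)..(2 * π / 3), ((Rp (c * Real.sin ψ)) ^ 2 - 1)⁻¹) :=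
  ⟨integral_comp_mul_sin_lt_of_strictAntiOn (inv_one_sub_Rm_sq_continuousOn hRm)
      (inv_one_sub_Rm_sq_strictAntiOn hRm) zero_le_one (fun _ => abs_inv_one_sub_Rm_sq_le hRm)
      hc hcc',
    integral_comp_mul_sin_lt_of_strictAntiOn (inv_Rp_sq_sub_one_continuousOn hRp)
      (inv_Rp_sq_sub_one_strictAntiOn hRp) zero_le_one (fun _ => abs_inv_Rp_sq_sub_one_le hRp)
      hc hcc'⟩
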